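/- arXiv:1311.3992 — 2 statements merged into one kernel-verified Lean document; each statement's English description precedes it below -/
import Mathlib

section
/- For every r ≥ 0 and all 1 ≤ i ≤ n, 1 ≤ a ≤ k, the following identity of ℂ-linear endomorphisms of P holds: Σ_{l=1}^{n} (E^r)_{il} ∘ X_{al} = Σ_{b=1}^{k} ((E' + (n−k)·I_k)^r)_{ab} ∘ X_{bi}, where E' + (n−k)·I_k denotes the k×k matrix over End_ℂ(P) obtained by adding (n−k) times the identity operator along the diagonal of E', and matrix powers are computed in the matrix algebra over End_ℂ(P). -/
noncomputable section

/-- The polynomial ring `P = ℂ[x_{ai} : 1 ≤ a ≤ k, 1 ≤ i ≤ n]` of polynomial functions on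
`k × n` matrices. -/
abbrev Pring (n k : ℕ) := MvPolynomial (Fin k × Fin n) ℂ

/-- `X_{ai}`: multiplication by the variable `x_{ai}`. -/
def Xop (n k : ℕ) (a : Fin k) (i : Fin n) : Module.End ℂ (Pring n k) :=
  LinearMap.mulLeft ℂ (MvPolynomial.X (a, i))

/-- `D_{ai}`: the partial derivative `∂/∂x_{ai}`. -/
def Dop (n k : ℕ) (a : Fin k) (i : Fin n) : Module.End ℂ (Pring n k) :=
  (MvPolynomial.pderiv (a, i)).toLinearMap

/-- The polarization operator `E_{ij} = Σ_a X_{ai} ∘ D_{aj}` (an entry of `XᵗD`),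
realizing `gl_n` on `P`. -/
def Eop (n k : ℕ) (i j : Fin n) : Module.End ℂ (Pring n k) :=
  ∑ a : Fin k, Xop n k a i * Dop n k a j

/-- The polarization operator `E'_{ab} = Σ_i X_{ai} ∘ D_{bi}` (an entry of `XDᵗ`),
realizing `gl_k` on `P`. -/
def E'op (n k : ℕ) (a b : Fin k) : Module.End ℂ (Pring n k) :=
  ∑ i : Fin n, Xop n k a i * Dop n k b i

/-- The `n × n` matrix `E` over `End_ℂ P` with entries `E_{ij}`. -/
def EmatW (n k : ℕ) : Matrix (Fin n) (Fin n) (Module.End ℂ (Pring n k)) :=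
  fun i j => Eop n k i j

/-- The `k × k` matrix `E'` over `End_ℂ P` with entries `E'_{ab}`. -/
def E'matW (n k : ℕ) : Matrix (Fin k) (Fin k) (Module.End ℂ (Pring n k)) :=
  fun a b => E'op n k a b

/-! The entries of `E` commute with those of `E'` (the two polarization actions commute), and
the Weyl relations `[D_p, X_q] = δ_pq` give the case `r = 1`: normal ordering
`Σ_l E_{il} X_{al}` and `Σ_b E'_{ab} X_{bi}` produces the same operator plus `n X_{ai}`,
resp. `k X_{ai}`. In matrix form this reads `E Xᵗ = (F X)ᵗ` with `F = E' + (n - k)`, and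
commuting the entries of `E` past those of `F ^ r` yields `E ^ r Xᵗ = (F ^ r X)ᵗ` by induction. -/

open MvPolynomial
open scoped Matrix

theorem MvPolynomial.pderiv_pderiv_comm {σ R : Type*} [CommRing R] (i j : σ)
    (f : MvPolynomial σ R) : pderiv i (pderiv j f) = pderiv j (pderiv i f) := by
  have h : ⁅pderiv i, pderiv j⁆ = (0 : Derivation R (MvPolynomial σ R) (MvPolynomial σ R)) :=
    derivation_ext fun m => by
      classical
      rw [Derivation.commutator_apply]
      simp only [pderiv_X, Pi.single_apply]
      split_ifs <;> simp
  rw [← sub_eq_zero, ← Derivation.commutator_apply, h, Derivation.zero_apply]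

namespace Matrix

variable {R m n : Type*} [Semiring R] [Fintype m] [Fintype n] [DecidableEq m] [DecidableEq n]

theorem commute_pow_apply_of_forall_commute {x : R} {B : Matrix m m R}
    (h : ∀ a b, Commute x (B a b)) (r : ℕ) (a b : m) : Commute x ((B ^ r) a b) := by
  induction r generalizing b with
  | zero => rw [pow_zero, one_apply]; split_ifs <;> simp
  | succ r ih =>
    rw [pow_succ, mul_apply]
    exact .sum_right _ _ _ fun c _ => (ih c).mul_right (h c b)

theorem pow_mul_transpose_eq_transpose_pow_mul {A : Matrix n n R} {B : Matrix m m R}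
    {N : Matrix m n R} (hAB : ∀ i j a b, Commute (A i j) (B a b)) (h : A * Nᵀ = (B * N)ᵀ)
    (r : ℕ) : A ^ r * Nᵀ = (B ^ r * N)ᵀ := by
  induction r with
  | zero => simp
  | succ r ih =>
    ext i a
    calc (A ^ (r + 1) * Nᵀ) i a = ∑ l, A i l * ∑ b, (B ^ r) a b * N b l := by
          rw [pow_succ', Matrix.mul_assoc, ih]; rfl
      _ = ∑ b, (B ^ r) a b * ∑ l, A i l * N b l := by
          simp only [Finset.mul_sum, ← mul_assoc]
          rw [Finset.sum_comm]
          refine Finset.sum_congr rfl fun b _ => Finset.sum_congr rfl fun l _ => ?_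
          rw [(commute_pow_apply_of_forall_commute (hAB i l) r a b).eq]
      _ = ∑ b, (B ^ r) a b * (B * N) b i :=
          Finset.sum_congr rfl fun b _ => congrArg _ (congrFun (congrFun h i) b)
      _ = (B ^ (r + 1) * N)ᵀ i a := by rw [pow_succ, Matrix.mul_assoc]; rfl

end Matrix

section Polarization

variable (n k : ℕ)

theorem commute_Xop_Xop (a b : Fin k) (i j : Fin n) : Commute (Xop n k a i) (Xop n k b j) :=
  LinearMap.ext fun f => by simp only [Xop, Module.End.mul_apply, LinearMap.mulLeft_apply]; ring

theorem commute_Dop_Dop (a b : Fin k) (i j : Fin n) : Commute (Dop n k a i) (Dop n k b j) :=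
  LinearMap.ext fun f => pderiv_pderiv_comm (a, i) (b, j) f

theorem Dop_mul_Xop (a b : Fin k) (i j : Fin n) :
    Dop n k a i * Xop n k b j = Xop n k b j * Dop n k a i + if (a, i) = (b, j) then 1 else 0 := by
  refine LinearMap.ext fun f => ?_
  rcases eq_or_ne (a, i) (b, j) with h | h
  · simp [Dop, Xop, h, mul_comm, add_comm]
  · simp [Dop, Xop, h, pderiv_X_of_ne h.symm, mul_comm]

theorem Xop_mul_Dop_mul_Xop_mul_Dop (a b c d : Fin k) (i j l m : Fin n) :
    Xop n k a i * Dop n k b j * (Xop n k c l * Dop n k d m) =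
      Xop n k a i * Xop n k c l * (Dop n k b j * Dop n k d m) +
        if (b, j) = (c, l) then Xop n k a i * Dop n k d m else 0 := by
  rw [mul_assoc, ← mul_assoc (Dop n k b j), Dop_mul_Xop]
  split_ifs <;> simp [mul_add, add_mul, mul_assoc]

theorem commute_Eop_E'op (i j : Fin n) (a b : Fin k) : Commute (Eop n k i j) (E'op n k a b) := by
  have hE : ∑ c : Fin k, ∑ l : Fin n,
      (if (c, j) = (a, l) then Xop n k c i * Dop n k b l else 0) = Xop n k a i * Dop n k b j := by
    simp [Prod.ext_iff, ite_and]
  have hE' : ∑ l : Fin n, ∑ c : Fin k,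
      (if (b, l) = (c, i) then Xop n k a l * Dop n k c j else 0) = Xop n k a i * Dop n k b j := by
    simp [Prod.ext_iff, ite_and]
  show Eop n k i j * E'op n k a b = E'op n k a b * Eop n k i j
  rw [Eop, E'op, Finset.sum_mul_sum, Finset.sum_mul_sum]
  simp only [Xop_mul_Dop_mul_Xop_mul_Dop, Finset.sum_add_distrib, hE, hE']
  rw [add_left_inj, Finset.sum_comm]
  refine Finset.sum_congr rfl fun l _ => Finset.sum_congr rfl fun c _ => ?_
  rw [(commute_Xop_Xop n k c a i l).eq, (commute_Dop_Dop n k c b j l).eq]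

theorem sum_Eop_mul_Xop (i : Fin n) (a : Fin k) :
    ∑ l, Eop n k i l * Xop n k a l =
      ∑ c, ∑ l, Xop n k c i * Xop n k a l * Dop n k c l + (n : ℂ) • Xop n k a i := by
  simp only [Eop, Finset.sum_mul, mul_assoc, Dop_mul_Xop, Prod.ext_iff, and_true, mul_add,
    mul_ite, mul_one, mul_zero, Finset.sum_add_distrib, Finset.sum_ite_eq', Finset.mem_univ,
    if_true, Finset.sum_const, Finset.card_univ, Fintype.card_fin]
  rw [Finset.sum_comm, Nat.cast_smul_eq_nsmul]

theorem sum_E'op_mul_Xop (a : Fin k) (i : Fin n) :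
    ∑ b, E'op n k a b * Xop n k b i =
      ∑ c, ∑ l, Xop n k c i * Xop n k a l * Dop n k c l + (k : ℂ) • Xop n k a i := by
  simp only [E'op, Finset.sum_mul, mul_assoc, Dop_mul_Xop, Prod.ext_iff, true_and, mul_add,
    mul_ite, mul_one, mul_zero, Finset.sum_add_distrib, Finset.sum_ite_eq', Finset.mem_univ,
    if_true, Finset.sum_const, Finset.card_univ, Fintype.card_fin]
  simp only [← mul_assoc, (commute_Xop_Xop n k a _ _ i).eq, Nat.cast_smul_eq_nsmul]

theorem EmatW_mul_transpose_Xop :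
    EmatW n k * (Matrix.of (Xop n k))ᵀ =
      ((E'matW n k + ((n : ℂ) - (k : ℂ)) • 1) * Matrix.of (Xop n k))ᵀ := by
  refine Matrix.ext fun i a => ?_
  simp only [Matrix.transpose_apply, Matrix.mul_apply, Matrix.of_apply, Matrix.add_apply,
    Matrix.smul_apply, Matrix.one_apply, add_mul, Finset.sum_add_distrib, smul_mul_assoc,
    ite_mul, one_mul, zero_mul, smul_ite, smul_zero, Finset.sum_ite_eq, Finset.mem_univ, if_true]
  change ∑ l, Eop n k i l * Xop n k a l = ∑ b, E'op n k a b * Xop n k b i + _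
  rw [sum_Eop_mul_Xop, sum_E'op_mul_Xop, add_assoc, ← add_smul, add_sub_cancel]

theorem commute_EmatW_E'matW_add_smul_one (i j : Fin n) (a b : Fin k) :
    Commute (EmatW n k i j) ((E'matW n k + ((n : ℂ) - (k : ℂ)) • 1) a b) := by
  rw [Matrix.add_apply, Matrix.smul_apply, Matrix.one_apply]
  refine (commute_Eop_E'op n k i j a b).add_right ?_
  split_ifs
  exacts [(Commute.one_right _).smul_right _, (Commute.zero_right _).smul_right _]

end Polarization

/-- for every `r ≥ 0` and all `i, a`, the identity
`Σ_{l=1}^{n} (E^r)_{il} ∘ X_{al} = Σ_{b=1}^{k} ((E' + (n−k)·I_k)^r)_{ab} ∘ X_{bi}`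
holds in `End_ℂ P` (matrix powers computed over `End_ℂ P`). -/
theorem stmt_12 (n k : ℕ) (r : ℕ) (i : Fin n) (a : Fin k) :
    ∑ l : Fin n, (EmatW n k ^ r) i l * Xop n k a l =
      ∑ b : Fin k, ((E'matW n k + ((n : ℂ) - (k : ℂ)) • 1) ^ r) a b * Xop n k b i :=
  congrFun (congrFun (Matrix.pow_mul_transpose_eq_transpose_pow_mul
    (commute_EmatW_E'matW_add_smul_one n k) (EmatW_mul_transpose_Xop n k) r) i) a
end
end

section
/- For every r ≥ 1 and all 1 ≤ i,j ≤ n, the following identity of ℂ-linear endomorphisms of P holds: (E^r)_{ij} = Σ_{a=1}^{k} Σ_{b=1}^{k} ((E' + (n−k)·I_k)^{r−1})_{ab} ∘ X_{bi} ∘ D_{aj}. (This is the coefficient-wise form of the identity u·T(u) = I_n + (T'(u+k−n)·X)ᵗ·D relating the formal resolvents T(u) of E and T'(u) of E'.) -/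
noncomputable section

open MvPolynomial
lemma pderiv_comm' {σ R : Type*} [CommRing R] [DecidableEq σ] (p q : σ) (f : MvPolynomial σ R) :
    pderiv p (pderiv q f) = pderiv q (pderiv p f) := by
  induction f using MvPolynomial.induction_on with
  | C a => simp
  | add f g hf hg => simp [hf, hg]
  | mul_X f s hf =>
      have h1 : ∀ t u : σ, pderiv t ((pderiv u) (X s : MvPolynomial σ R)) = 0 := by
        intro t u
        by_cases h : s = u <;> simp [h]
      simp only [pderiv_mul, map_add, pderiv_mul, hf, h1, mul_zero, add_zero]
      ring

-- Heisenberg relation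
lemma DXcomm (n k : ℕ) (a b : Fin k) (j i : Fin n) :
    Dop n k a j * Xop n k b i =
      Xop n k b i * Dop n k a j + (if a = b ∧ j = i then 1 else 0) := by
  apply LinearMap.ext; intro f
  by_cases h : a = b ∧ j = i
  · obtain ⟨h1, h2⟩ := h
    subst h1; subst h2
    simp [Dop, Xop, Module.End.mul_apply, pderiv_mul]
  · have hne : ((b, i) : Fin k × Fin n) ≠ (a, j) := by
      intro hh
      exact h ⟨(Prod.mk.injEq _ _ _ _ ▸ hh).1.symm, (Prod.mk.injEq _ _ _ _ ▸ hh).2.symm⟩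
    simp [Dop, Xop, Module.End.mul_apply, pderiv_mul, h, pderiv_X_of_ne hne]

lemma XXcomm (n k : ℕ) (a b : Fin k) (i l : Fin n) :
    Xop n k a i * Xop n k b l = Xop n k b l * Xop n k a i := by
  apply LinearMap.ext; intro f
  simp [Xop, Module.End.mul_apply]
  ring

lemma DDcomm (n k : ℕ) (a b : Fin k) (i l : Fin n) :
    Dop n k a i * Dop n k b l = Dop n k b l * Dop n k a i := by
  apply LinearMap.ext; intro f
  simp [Dop, Module.End.mul_apply, pderiv_comm']

lemma E'X (n k : ℕ) (a c b : Fin k) (i : Fin n) :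
    E'op n k a c * Xop n k b i =
      Xop n k b i * E'op n k a c + (if c = b then Xop n k a i else 0) := by
  unfold E'op
  rw [Finset.sum_mul]
  have h : ∀ m : Fin n, Xop n k a m * Dop n k c m * Xop n k b i =
      Xop n k b i * (Xop n k a m * Dop n k c m) +
        (if c = b ∧ m = i then Xop n k a m else 0) := by
    intro m
    rw [mul_assoc, DXcomm, mul_add, mul_ite, mul_one, mul_zero, ← mul_assoc,
      XXcomm n k a b m i, mul_assoc]
  rw [Finset.sum_congr rfl fun m _ => h m, Finset.sum_add_distrib, ← Finset.mul_sum]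
  congr 1
  simp [ite_and]

lemma E'D (n k : ℕ) (a c b : Fin k) (m : Fin n) :
    E'op n k a c * Dop n k b m =
      Dop n k b m * E'op n k a c - (if a = b then Dop n k c m else 0) := by
  unfold E'op
  rw [Finset.sum_mul]
  have h : ∀ l : Fin n, Xop n k a l * Dop n k c l * Dop n k b m =
      Dop n k b m * (Xop n k a l * Dop n k c l) -
        (if b = a ∧ m = l then Dop n k c l else 0) := by
    intro l
    rw [mul_assoc, DDcomm n k c b l m, ← mul_assoc]
    have := DXcomm n k b a m l
    have hx : Xop n k a l * Dop n k b m =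
        Dop n k b m * Xop n k a l - (if b = a ∧ m = l then 1 else 0) := by
      rw [this]; abel
    rw [hx, sub_mul, mul_assoc, ite_mul, one_mul, zero_mul]
  rw [Finset.sum_congr rfl fun l _ => h l, Finset.sum_sub_distrib, ← Finset.mul_sum]
  congr 1
  · simp [ite_and, eq_comm]

lemma E'E' (n k : ℕ) (a c d b : Fin k) :
    E'op n k a c * E'op n k d b =
      E'op n k d b * E'op n k a c + (if c = d then E'op n k a b else 0)
        - (if a = b then E'op n k d c else 0) := by
  have h : ∀ m : Fin n, E'op n k a c * (Xop n k d m * Dop n k b m)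
      = Xop n k d m * Dop n k b m * E'op n k a c
        + (if c = d then Xop n k a m * Dop n k b m else 0)
        - (if a = b then Xop n k d m * Dop n k c m else 0) := by
    intro m
    rw [← mul_assoc, E'X, add_mul, mul_assoc, E'D, mul_sub]
    simp only [ite_mul, mul_ite, zero_mul, mul_zero, ← mul_assoc]
    abel
  calc E'op n k a c * E'op n k d b
      = ∑ m : Fin n, E'op n k a c * (Xop n k d m * Dop n k b m) := by
        rw [← Finset.mul_sum]; rfl
    _ = ∑ m : Fin n, (Xop n k d m * Dop n k b m * E'op n k a c
          + (if c = d then Xop n k a m * Dop n k b m else 0)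
          - (if a = b then Xop n k d m * Dop n k c m else 0)) :=
        Finset.sum_congr rfl fun m _ => h m
    _ = E'op n k d b * E'op n k a c + (if c = d then E'op n k a b else 0)
        - (if a = b then E'op n k d c else 0) := by
        rw [Finset.sum_sub_distrib, Finset.sum_add_distrib, ← Finset.sum_mul]
        congr 1
        · congr 1
          by_cases hcd : c = d <;> simp [hcd, E'op]
        · by_cases hab : a = b <;> simp [hab, E'op]

/-- F = E' + (n-k)·1 -/
def Fm (n k : ℕ) : Matrix (Fin k) (Fin k) (Module.End ℂ (Pring n k)) :=
  E'matW n k + ((n : ℂ) - (k : ℂ)) • 1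

/-- g_{ac} = E'_{ac} + n δ_{ac} -/
def gop (n k : ℕ) (a c : Fin k) : Module.End ℂ (Pring n k) :=
  E'op n k a c + (if a = c then (n : ℂ) • (1 : Module.End ℂ (Pring n k)) else 0)

lemma Fm_apply (n k : ℕ) (a b : Fin k) :
    Fm n k a b = E'op n k a b
      + (if a = b then ((n : ℂ) - (k : ℂ)) • (1 : Module.End ℂ (Pring n k)) else 0) := by
  simp only [Fm, E'matW, Matrix.add_apply, Matrix.smul_apply, Matrix.one_apply]
  split_ifs <;> simp

lemma swapFg (n k : ℕ) (a c d b : Fin k) :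
    Fm n k d b * gop n k a c =
      gop n k a c * Fm n k d b - (if c = d then E'op n k a b else 0)
        + (if a = b then E'op n k d c else 0) := by
  have key2 : E'op n k d b * E'op n k a c =
      E'op n k a c * E'op n k d b - (if c = d then E'op n k a b else 0)
        + (if a = b then E'op n k d c else 0) := by
    rw [E'E' n k a c d b]; abel
  simp only [Fm_apply, gop, mul_add, add_mul, key2, ite_mul, mul_ite, zero_mul, mul_zero,
    smul_mul_assoc, mul_smul_comm, one_mul, mul_one]
  split_ifs <;> simp [smul_smul, smul_add] <;> module

lemma traceLemma (n k : ℕ) (m : ℕ) (a b : Fin k) :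
    ∑ c : Fin k, (Fm n k ^ m) c b * gop n k a c
      = (Fm n k ^ (m+1)) a b + (if a = b then ∑ c : Fin k, (Fm n k ^ m) c c else 0) := by
  induction m generalizing a b with
  | zero =>
    simp only [pow_zero, Matrix.one_apply, zero_add, pow_one, ite_mul, one_mul, zero_mul,
      Finset.sum_ite_eq', Finset.mem_univ, if_true]
    have hk : (∑ _c : Fin k, (1 : Module.End ℂ (Pring n k))) = (k : ℂ) • 1 := by
      rw [Finset.sum_const, Finset.card_univ, Fintype.card_fin, ← Nat.cast_smul_eq_nsmul ℂ]
    simp only [eq_self_iff_true, if_true, hk, gop]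
    rw [Fm_apply]
    by_cases hab : a = b <;> simp [hab] <;> module
  | succ m ih =>
    have e1 : ∀ c : Fin k, (Fm n k ^ (m+1)) c b * gop n k a c
        = ∑ d : Fin k, ((Fm n k ^ m) c d * (gop n k a c * Fm n k d b)
            - (if c = d then (Fm n k ^ m) c d * E'op n k a b else 0)
            + (if a = b then (Fm n k ^ m) c d * E'op n k d c else 0)) := by
      intro c
      rw [pow_succ, Matrix.mul_apply, Finset.sum_mul]
      refine Finset.sum_congr rfl fun d _ => ?_
      rw [mul_assoc, swapFg]
      simp only [mul_add, mul_sub, mul_ite, mul_zero]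
    rw [Finset.sum_congr rfl fun c _ => e1 c]
    simp only [Finset.sum_add_distrib, Finset.sum_sub_distrib]
    have hA : (∑ c : Fin k, ∑ d : Fin k, (Fm n k ^ m) c d * (gop n k a c * Fm n k d b))
        = ∑ d : Fin k, (∑ c : Fin k, (Fm n k ^ m) c d * gop n k a c) * Fm n k d b := by
      rw [Finset.sum_comm]
      refine Finset.sum_congr rfl fun d _ => ?_
      rw [Finset.sum_mul]
      exact Finset.sum_congr rfl fun c _ => (mul_assoc _ _ _).symm
    have hB : (∑ c : Fin k, ∑ d : Fin k,
          (if c = d then (Fm n k ^ m) c d * E'op n k a b else 0))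
        = (∑ c : Fin k, (Fm n k ^ m) c c) * E'op n k a b := by
      simp only [Finset.sum_ite_eq, Finset.mem_univ, if_true, Finset.sum_mul]
    have hC : (∑ c : Fin k, ∑ d : Fin k,
          (if a = b then (Fm n k ^ m) c d * E'op n k d c else 0))
        = if a = b then ∑ c : Fin k, ∑ d : Fin k, (Fm n k ^ m) c d * E'op n k d c else 0 := by
      simp only [Finset.sum_ite_irrel, Finset.sum_const_zero]
    rw [hA, hB, hC]
    have step2 : (∑ d : Fin k, (∑ c : Fin k, (Fm n k ^ m) c d * gop n k a c) * Fm n k d b)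
        = (Fm n k ^ (m+2)) a b + (∑ c : Fin k, (Fm n k ^ m) c c) * Fm n k a b := by
      rw [Finset.sum_congr rfl fun d _ => by rw [ih a d]]
      simp only [add_mul, ite_mul, zero_mul, Finset.sum_add_distrib, Finset.sum_ite_eq,
        Finset.mem_univ, if_true]
      congr 1
    have step3 : (∑ c : Fin k, ∑ d : Fin k, (Fm n k ^ m) c d * E'op n k d c)
        = (∑ c : Fin k, (Fm n k ^ (m+1)) c c)
          - ((n:ℂ)-(k:ℂ)) • (∑ c : Fin k, (Fm n k ^ m) c c) := by
      rw [Finset.smul_sum, ← Finset.sum_sub_distrib]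
      refine Finset.sum_congr rfl fun c _ => ?_
      have e2 : ∀ d : Fin k, (Fm n k ^ m) c d * E'op n k d c
          = (Fm n k ^ m) c d * Fm n k d c
            - (if d = c then ((n:ℂ)-(k:ℂ)) • (Fm n k ^ m) c d else 0) := by
        intro d
        rw [Fm_apply, mul_add, mul_ite, mul_zero, mul_smul_comm, mul_one]
        by_cases h : d = c <;> simp [h]
      rw [Finset.sum_congr rfl fun d _ => e2 d, Finset.sum_sub_distrib, ← Matrix.mul_apply,
        ← pow_succ]
      congr 1
      simp only [Finset.sum_ite_eq', Finset.mem_univ, if_true]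
    rw [step2, step3]
    set t := ∑ c : Fin k, (Fm n k ^ m) c c with ht
    set t' := ∑ c : Fin k, (Fm n k ^ (m+1)) c c with ht'
    have hFE : t * Fm n k a b = t * E'op n k a b
        + (if a = b then ((n:ℂ)-(k:ℂ)) • t else 0) := by
      rw [Fm_apply, mul_add, mul_ite, mul_zero, mul_smul_comm, mul_one]
    rw [hFE]
    by_cases hab : a = b <;> simp only [hab, if_true, if_false] <;> abel

lemma mainLemma (n k : ℕ) (m : ℕ) (i j : Fin n) :
    (EmatW n k ^ (m+1)) i j
      = ∑ a : Fin k, ∑ b : Fin k, (Fm n k ^ m) a b * (Xop n k b i * Dop n k a j) := by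
  induction m generalizing i j with
  | zero =>
    simp only [zero_add, pow_one, pow_zero, Matrix.one_apply, ite_mul, one_mul, zero_mul,
      Finset.sum_ite_eq, Finset.mem_univ, if_true]
    simp [EmatW, Eop, mul_assoc]
  | succ m ih =>
    -- inner sum computation for fixed a b, with M := (Fm^m) a b
    have inner : ∀ (M : Module.End ℂ (Pring n k)) (a b : Fin k),
        (∑ l : Fin n, (M * (Xop n k b i * Dop n k a l)) * Eop n k l j)
          = (∑ c : Fin k, (M * E'op n k c a) * (Xop n k b i * Dop n k c j))
            - (if a = b then ∑ c : Fin k, M * (Xop n k c i * Dop n k c j) else 0)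
            + (n : ℂ) • (M * (Xop n k b i * Dop n k a j)) := by
      intro M a b
      have h1 : ∀ l : Fin n, (M * (Xop n k b i * Dop n k a l)) * Eop n k l j
          = ∑ c : Fin k, ((M * Xop n k b i) * ((Xop n k c l * Dop n k a l) * Dop n k c j)
              + (if a = c then (M * Xop n k b i) * Dop n k c j else 0)) := by
        intro l
        rw [Eop, Finset.mul_sum]
        refine Finset.sum_congr rfl fun c _ => ?_
        have : Dop n k a l * (Xop n k c l * Dop n k c j)
            = (Xop n k c l * Dop n k a l) * Dop n k c j
              + (if a = c then Dop n k c j else 0) := by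
          rw [← mul_assoc, DXcomm]
          simp only [and_true, add_mul, ite_mul, one_mul, zero_mul, mul_assoc]
        rw [mul_assoc, mul_assoc, this, mul_add]
        by_cases h : a = c <;> simp [h, mul_assoc, mul_add]
      rw [Finset.sum_congr rfl fun l _ => h1 l]
      rw [Finset.sum_comm]
      simp only [Finset.sum_add_distrib]
      congr 1
      · -- main part
        have h2 : ∀ c : Fin k,
            (∑ l : Fin n, (M * Xop n k b i) * ((Xop n k c l * Dop n k a l) * Dop n k c j))
              = (M * E'op n k c a) * (Xop n k b i * Dop n k c j)
                - (if a = b then M * (Xop n k c i * Dop n k c j) else 0) := by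
          intro c
          rw [← Finset.mul_sum, ← Finset.sum_mul]
          rw [show (∑ l : Fin n, Xop n k c l * Dop n k a l) = E'op n k c a from rfl]
          have hx : Xop n k b i * E'op n k c a
              = E'op n k c a * Xop n k b i - (if a = b then Xop n k c i else 0) := by
            rw [E'X n k c a b i]; abel
          rw [mul_assoc M, ← mul_assoc (Xop n k b i), hx, sub_mul, mul_sub]
          simp only [ite_mul, mul_ite, zero_mul, mul_zero, mul_assoc]
        rw [Finset.sum_congr rfl fun c _ => h2 c, Finset.sum_sub_distrib]
        congr 1
        by_cases hab : a = b <;> simp [hab]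
      · -- delta part
        simp only [Finset.sum_ite_irrel, Finset.sum_const_zero, Finset.sum_ite_eq,
          Finset.mem_univ, if_true, Finset.sum_const, Finset.card_univ, Fintype.card_fin,
          mul_assoc]
        rw [Nat.cast_smul_eq_nsmul]
    -- assemble
    have expand : (EmatW n k ^ (m+2)) i j
        = ∑ a : Fin k, ∑ b : Fin k,
            (∑ l : Fin n, ((Fm n k ^ m) a b * (Xop n k b i * Dop n k a l)) * Eop n k l j) := by
      rw [pow_succ, Matrix.mul_apply]
      rw [Finset.sum_congr rfl fun l _ => by
        rw [ih i l, show EmatW n k l j = Eop n k l j from rfl, Finset.sum_mul]]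
      rw [Finset.sum_comm]
      refine Finset.sum_congr rfl fun a _ => ?_
      rw [Finset.sum_congr rfl fun l _ => Finset.sum_mul ..]
      rw [Finset.sum_comm]
    rw [expand, Finset.sum_congr rfl fun a _ => Finset.sum_congr rfl fun b _ =>
      inner ((Fm n k ^ m) a b) a b]
    simp only [Finset.sum_add_distrib, Finset.sum_sub_distrib]
    have hT : ∀ c b : Fin k, (∑ a : Fin k, (Fm n k ^ m) a b * E'op n k c a)
        = (Fm n k ^ (m+1)) c b + (if c = b then ∑ e : Fin k, (Fm n k ^ m) e e else 0)
          - (n : ℂ) • (Fm n k ^ m) c b := by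
      intro c b
      have htl := traceLemma n k m c b
      have hg : ∀ a : Fin k, (Fm n k ^ m) a b * gop n k c a
          = (Fm n k ^ m) a b * E'op n k c a
            + (if c = a then (n : ℂ) • (Fm n k ^ m) a b else 0) := by
        intro a
        rw [gop, mul_add, mul_ite, mul_zero, mul_smul_comm, mul_one]
      rw [Finset.sum_congr rfl fun a _ => hg a, Finset.sum_add_distrib] at htl
      simp only [Finset.sum_ite_eq, Finset.mem_univ, if_true] at htl
      rw [eq_sub_iff_add_eq, ← htl]
    have hS1 : (∑ a : Fin k, ∑ b : Fin k, ∑ c : Fin k,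
          ((Fm n k ^ m) a b * E'op n k c a) * (Xop n k b i * Dop n k c j))
        = (∑ b : Fin k, ∑ c : Fin k, (Fm n k ^ (m+1)) c b * (Xop n k b i * Dop n k c j))
          + (∑ b : Fin k, ∑ e : Fin k, (Fm n k ^ m) e e * (Xop n k b i * Dop n k b j))
          - (n : ℂ) • (∑ b : Fin k, ∑ c : Fin k,
              (Fm n k ^ m) c b * (Xop n k b i * Dop n k c j)) := by
      rw [Finset.sum_comm]
      have swap2 : ∀ b : Fin k, (∑ a : Fin k, ∑ c : Fin k,
            ((Fm n k ^ m) a b * E'op n k c a) * (Xop n k b i * Dop n k c j))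
          = ∑ c : Fin k, (∑ a : Fin k, (Fm n k ^ m) a b * E'op n k c a)
              * (Xop n k b i * Dop n k c j) := by
        intro b
        rw [Finset.sum_comm]
        exact Finset.sum_congr rfl fun c _ => (Finset.sum_mul ..).symm
      rw [Finset.sum_congr rfl fun b _ => swap2 b]
      rw [Finset.sum_congr rfl fun b _ => Finset.sum_congr rfl fun c _ => by rw [hT c b]]
      simp only [sub_mul, add_mul, ite_mul, zero_mul, smul_mul_assoc,
        Finset.sum_add_distrib, Finset.sum_sub_distrib, Finset.sum_ite_eq,
        Finset.sum_ite_eq', Finset.mem_univ, if_true, Finset.smul_sum, Finset.sum_mul]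
    rw [hS1]
    have hC : (∑ a : Fin k, ∑ b : Fin k,
          if a = b then (∑ c : Fin k, (Fm n k ^ m) a b * (Xop n k c i * Dop n k c j)) else 0)
        = ∑ b : Fin k, ∑ e : Fin k, (Fm n k ^ m) e e * (Xop n k b i * Dop n k b j) := by
      simp only [Finset.sum_ite_eq, Finset.mem_univ, if_true]
      exact Finset.sum_comm
    have hN : (∑ a : Fin k, ∑ b : Fin k,
          (n : ℂ) • ((Fm n k ^ m) a b * (Xop n k b i * Dop n k a j)))
        = (n : ℂ) • ∑ b : Fin k, ∑ c : Fin k,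
            (Fm n k ^ m) c b * (Xop n k b i * Dop n k c j) := by
      rw [Finset.smul_sum]
      simp only [Finset.smul_sum]
      exact Finset.sum_comm
    have hTt : (∑ b : Fin k, ∑ c : Fin k, (Fm n k ^ (m+1)) c b * (Xop n k b i * Dop n k c j))
        = ∑ a : Fin k, ∑ b : Fin k, (Fm n k ^ (m+1)) a b * (Xop n k b i * Dop n k a j) :=
      Finset.sum_comm
    rw [hC, hN, hTt]
    abel

/-- for every `r ≥ 1` and all `i, j`, the identity
`(E^r)_{ij} = Σ_{a=1}^{k} Σ_{b=1}^{k} ((E' + (n−k)·I_k)^{r−1})_{ab} ∘ X_{bi} ∘ D_{aj}`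
holds in `End_ℂ P`; this is the coefficient-wise form of
`u·T(u) = I_n + (T'(u+k−n)·X)ᵗ·D`. -/
theorem stmt_13 (n k : ℕ) (r : ℕ) (hr : 1 ≤ r) (i j : Fin n) :
    (EmatW n k ^ r) i j =
      ∑ a : Fin k, ∑ b : Fin k,
        ((E'matW n k + ((n : ℂ) - (k : ℂ)) • 1) ^ (r - 1)) a b * Xop n k b i * Dop n k a j := by
  obtain ⟨m, rfl⟩ : ∃ m, r = m + 1 := ⟨r - 1, (Nat.succ_pred_eq_of_pos hr).symm⟩
  rw [show E'matW n k + ((n : ℂ) - (k : ℂ)) • (1 : Matrix (Fin k) (Fin k)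
      (Module.End ℂ (Pring n k))) = Fm n k from rfl]
  simp only [Nat.add_sub_cancel]
  rw [mainLemma n k m i j]
  exact Finset.sum_congr rfl fun a _ => Finset.sum_congr rfl fun b _ => (mul_assoc _ _ _).symm
end
end
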